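/- For any two bounded continuous vector fields A₀, A₁ : Ω → ℝ³, one has |√(μ(A₀)) − √(μ(A₁))| ≤ sup_{x∈Ω} |A₀(x) − A₁(x)|. -/

import Mathlib

open MeasureTheory Real Set
open scoped RealInnerProductSpace

noncomputable section

/-- ℝ³ with its Euclidean structure. -/
abbrev E3 := EuclideanSpace ℝ (Fin 3)

/-- Reinterpret a plain vector `Fin 3 → ℝ` as an element of Euclidean space. -/
def ofV (v : Fin 3 → ℝ) : E3 := WithLp.toLp 2 v

/-- Partial derivative `∂ᵢ f` of a scalar function on ℝ³. -/
def pd (f : E3 → ℝ) (i : Fin 3) (x : E3) : ℝ := fderiv ℝ f x (EuclideanSpace.single i 1)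

/-- Divergence of a vector field: `div u = ∂₁u₁ + ∂₂u₂ + ∂₃u₃`. -/
def vdiv (u : E3 → E3) (x : E3) : ℝ := ∑ i, pd (fun y => u y i) i x

/-- Curl of a vector field:
`curl u = (∂₂u₃ − ∂₃u₂, ∂₃u₁ − ∂₁u₃, ∂₁u₂ − ∂₂u₁)`. -/
def vcurl (u : E3 → E3) (x : E3) : E3 := ofV ![
  pd (fun y => u y 2) 1 x - pd (fun y => u y 1) 2 x,
  pd (fun y => u y 0) 2 x - pd (fun y => u y 2) 0 x,
  pd (fun y => u y 1) 0 x - pd (fun y => u y 0) 1 x]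

/-- `|i∇ψ + Aψ|²(x) = Σⱼ |i ∂ⱼψ(x) + Aⱼ(x) ψ(x)|²`, the squared magnetic gradient. -/
def magSq (A : E3 → E3) (ψ : E3 → ℂ) (x : E3) : ℝ :=
  ∑ j, ‖Complex.I * fderiv ℝ ψ x (EuclideanSpace.single j 1) + (A x j : ℂ) * ψ x‖ ^ 2

/-- `μ(A)`: the ground-state energy (lowest Neumann eigenvalue) of `(i∇+A)²` on `Ω`,
defined as the infimum of the Rayleigh quotient over admissible `ψ`. -/
def mu (Ω : Set E3) (A : E3 → E3) : ℝ :=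
  sInf { r : ℝ | ∃ ψ : E3 → ℂ, ContDiffOn ℝ 1 ψ Ω ∧
    IntegrableOn (fun x => ‖ψ x‖ ^ 2) Ω ∧
    IntegrableOn (magSq A ψ) Ω ∧
    0 < (∫ x in Ω, ‖ψ x‖ ^ 2) ∧
    r = (∫ x in Ω, magSq A ψ x) / (∫ x in Ω, ‖ψ x‖ ^ 2) }

/-- The rotation group SO(3) as a set of 3×3 real matrices. -/
def SO3 : Set (Matrix (Fin 3) (Fin 3) ℝ) := { Q | Q.transpose * Q = 1 ∧ Q.det = 1 }

/-- The helical field `n_τ(x) = (cos(τx₃), sin(τx₃), 0)`. -/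
def nhel (τ : ℝ) (x : E3) : E3 := ofV ![Real.cos (τ * x 2), Real.sin (τ * x 2), 0]

/-- `n_τ^Q(x) = Q n_τ(Qᵀ x)`. -/
def nQ (τ : ℝ) (Q : Matrix (Fin 3) (Fin 3) ℝ) (x : E3) : E3 :=
  ofV (Q.mulVec (nhel τ (ofV (Q.transpose.mulVec (fun i => x i)))))

/-- `μ*(q,τ) = inf_{Q ∈ SO(3)} μ(q n_τ^Q)`. -/
def muStar (Ω : Set E3) (q τ : ℝ) : ℝ := ⨅ Q : SO3, mu Ω (fun x => q • nQ τ Q.1 x)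

/-- `|∇u|² = Σ_{i,j} (∂ᵢuⱼ)²`. -/
def gradSq (u : E3 → E3) (x : E3) : ℝ := ∑ i, ∑ j, (pd (fun y => u y j) i x) ^ 2

/-- Second partial derivative `∂ᵢ∂ᵢ f`. -/
def pd2 (f : E3 → ℝ) (i : Fin 3) : E3 → ℝ := pd (pd f i) i

/-- Componentwise Laplacian of a vector field. -/
def vlap (u : E3 → E3) (x : E3) : E3 := ofV (fun j => ∑ i, pd2 (fun y => u y j) i x)

/-- The Landau–de Gennes functional
`F(ψ,n) = ∫|i∇ψ+qnψ|² − κ²∫|ψ|² + (κ²/2)∫|ψ|⁴ + K₁∫(div n)² + K₂∫|curl n + τn|²`. -/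
def LdG (Ω : Set E3) (q τ κ K₁ K₂ : ℝ) (ψ : E3 → ℂ) (n : E3 → E3) : ℝ :=
  (∫ x in Ω, magSq (fun y => q • n y) ψ x) - κ ^ 2 * (∫ x in Ω, ‖ψ x‖ ^ 2)
    + κ ^ 2 / 2 * (∫ x in Ω, ‖ψ x‖ ^ 4)
    + K₁ * (∫ x in Ω, (vdiv n x) ^ 2)
    + K₂ * (∫ x in Ω, ‖vcurl n x + τ • n x‖ ^ 2)

/-- Smooth compactly supported test vector fields in `Ω`. -/
def testFields (Ω : Set E3) : Set (E3 → E3) :=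
  { u | ContDiff ℝ (⊤ : ℕ∞) u ∧ HasCompactSupport u ∧ tsupport u ⊆ Ω }

/-- The quadratic form `Q_τ(u) = ‖div u‖²_{L²} + ‖curl u + τu‖²_{L²}`. -/
def Qform (Ω : Set E3) (τ : ℝ) (u : E3 → E3) : ℝ :=
  (∫ x in Ω, (vdiv u x) ^ 2) + ∫ x in Ω, ‖vcurl u x + τ • u x‖ ^ 2

/-- `μ_τ`: the bottom of the quadratic form `Q_τ` over test fields (ground state of
`T_τ = −Δ + 2τ curl + τ²` with Dirichlet conditions). -/
def muT (Ω : Set E3) (τ : ℝ) : ℝ :=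
  sInf { r : ℝ | ∃ u ∈ testFields Ω, u ≠ 0 ∧ r = Qform Ω τ u / ∫ x in Ω, ‖u x‖ ^ 2 }

/-- `λ₁`: the lowest Dirichlet eigenvalue of `−Δ` on `Ω`, via the Rayleigh quotient. -/
def lam1 (Ω : Set E3) : ℝ :=
  sInf { r : ℝ | ∃ u ∈ testFields Ω, u ≠ 0 ∧ r = (∫ x in Ω, gradSq u x) / ∫ x in Ω, ‖u x‖ ^ 2 }
/-- The Rayleigh quotient set. -/
def RQ (Ω : Set E3) (A : E3 → E3) : Set ℝ :=
  { r : ℝ | ∃ ψ : E3 → ℂ, ContDiffOn ℝ 1 ψ Ω ∧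
    IntegrableOn (fun x => ‖ψ x‖ ^ 2) Ω ∧
    IntegrableOn (magSq A ψ) Ω ∧
    0 < (∫ x in Ω, ‖ψ x‖ ^ 2) ∧
    r = (∫ x in Ω, magSq A ψ x) / (∫ x in Ω, ‖ψ x‖ ^ 2) }

lemma mu_eq (Ω : Set E3) (A : E3 → E3) : mu Ω A = sInf (RQ Ω A) := rfl

lemma E3_sq_apply_le (x : E3) (j : Fin 3) : (x j) ^ 2 ≤ ‖x‖ ^ 2 := by
  rw [EuclideanSpace.norm_eq, Real.sq_sqrt (by positivity)]
  calc (x j)^2 = ‖x j‖^2 := by rw [Real.norm_eq_abs, sq_abs]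
  _ ≤ ∑ i, ‖x i‖^2 := Finset.single_le_sum (f := fun i => ‖x i‖^2)
      (fun i _ => by positivity) (Finset.mem_univ j)

lemma E3_norm_sq (x : E3) : ‖x‖^2 = ∑ j, (x j)^2 := by
  rw [EuclideanSpace.norm_eq, Real.sq_sqrt (by positivity)]
  simp [Real.norm_eq_abs, sq_abs]

lemma C3_norm_sq (v : EuclideanSpace ℂ (Fin 3)) : ‖v‖^2 = ∑ j, ‖v j‖^2 := by
  rw [EuclideanSpace.norm_eq, Real.sq_sqrt (by positivity)]

lemma magSq_nonneg (A : E3 → E3) (ψ : E3 → ℂ) (x : E3) : 0 ≤ magSq A ψ x :=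
  Finset.sum_nonneg fun _ _ => by positivity

lemma RQ_nonneg (Ω : Set E3) (A : E3 → E3) : ∀ r ∈ RQ Ω A, 0 ≤ r := by
  rintro r ⟨ψ, -, -, -, hpos, rfl⟩
  exact div_nonneg (integral_nonneg fun x => magSq_nonneg A ψ x) hpos.le

lemma RQ_bddBelow (Ω : Set E3) (A : E3 → E3) : BddBelow (RQ Ω A) :=
  ⟨0, fun r hr => RQ_nonneg Ω A r hr⟩

lemma RQ_nonempty (Ω : Set E3) (hne : Ω.Nonempty) (hopen : IsOpen Ω)
    (hbdd : Bornology.IsBounded Ω) (A : E3 → E3) (hAc : ContinuousOn A Ω)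
    (M : ℝ) (hAb : ∀ x ∈ Ω, ‖A x‖ ≤ M) : (RQ Ω A).Nonempty := by
  have hfin : volume Ω < ⊤ := hbdd.measure_lt_top
  have hΩm : MeasurableSet Ω := hopen.measurableSet
  have hms : magSq A (fun _ => (1:ℂ)) = fun x => ∑ j, (A x j)^2 := by
    funext x
    simp only [magSq, fderiv_const_apply, ContinuousLinearMap.zero_apply, mul_zero, mul_one,
      zero_add, Complex.norm_real, sq_abs, Real.norm_eq_abs]
  have hL : IntegrableOn (fun x : E3 => ‖(1:ℂ)‖ ^ 2) Ω := by
    simp only [norm_one, one_pow]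
    exact integrableOn_const (C := (1:ℝ)) hfin.ne
  have hposL : 0 < ∫ x in Ω, ‖(1:ℂ)‖ ^ 2 := by
    simp only [norm_one, one_pow]
    rw [setIntegral_const, smul_eq_mul, mul_one]
    exact ENNReal.toReal_pos (hopen.measure_pos volume hne).ne' hfin.ne
  have hIm : IntegrableOn (magSq A (fun _ => (1:ℂ))) Ω := by
    rw [hms]
    have hcont : ContinuousOn (fun x => ∑ j, (A x j)^2) Ω := by
      apply continuousOn_finset_sum
      intro j _
      exact (((EuclideanSpace.proj j).continuous.comp_continuousOn hAc)).pow 2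
    refine Integrable.mono' (integrableOn_const (C := M^2) hfin.ne)
      (hcont.aestronglyMeasurable hΩm) ?_
    refine (ae_restrict_iff' hΩm).2 (ae_of_all _ fun x hx => ?_)
    have h1 : ∑ j, (A x j)^2 = ‖A x‖^2 := (E3_norm_sq (A x)).symm
    rw [Real.norm_of_nonneg (Finset.sum_nonneg fun _ _ => sq_nonneg _), h1]
    have := hAb x hx
    nlinarith [norm_nonneg (A x)]
  exact ⟨_, (fun _ => (1:ℂ)), contDiffOn_const, hL, hIm, hposL, rfl⟩

lemma mu_nonneg (Ω : Set E3) (A : E3 → E3) (hne : (RQ Ω A).Nonempty) : 0 ≤ mu Ω A := by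
  rw [mu_eq]; exact le_csInf hne (RQ_nonneg Ω A)

set_option maxHeartbeats 1000000 in
lemma sqrt_mu_le (Ω : Set E3) (hne : Ω.Nonempty) (hopen : IsOpen Ω)
    (hbdd : Bornology.IsBounded Ω) (A₀ A₁ : E3 → E3)
    (hA₀c : ContinuousOn A₀ Ω) (hA₁c : ContinuousOn A₁ Ω)
    (M₀ : ℝ) (hA₀b : ∀ x ∈ Ω, ‖A₀ x‖ ≤ M₀) (M₁ : ℝ) (hA₁b : ∀ x ∈ Ω, ‖A₁ x‖ ≤ M₁) :
    Real.sqrt (mu Ω A₀) ≤ Real.sqrt (mu Ω A₁) + ⨆ x : Ω, ‖A₀ ↑x - A₁ ↑x‖ := by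
  have hΩm : MeasurableSet Ω := hopen.measurableSet
  set S := ⨆ x : Ω, ‖A₀ ↑x - A₁ ↑x‖ with hS
  have hSb : ∀ x ∈ Ω, ‖A₀ x - A₁ x‖ ≤ S := by
    intro x hx
    refine le_ciSup (f := fun x : Ω => ‖A₀ ↑x - A₁ ↑x‖) ?_ (⟨x, hx⟩ : Ω)
    refine ⟨M₀ + M₁, ?_⟩
    rintro y ⟨z, rfl⟩
    exact (norm_sub_le _ _).trans (add_le_add (hA₀b z z.2) (hA₁b z z.2))
  have hS0 : 0 ≤ S := (norm_nonneg _).trans (hSb hne.choose hne.choose_spec)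
  -- key step
  have key : ∀ r ∈ RQ Ω A₁, Real.sqrt (mu Ω A₀) ≤ Real.sqrt r + S := by
    rintro r ⟨ψ, hψ, hL, hI₁, hLpos, rfl⟩
    set a : E3 → ℝ := fun x => Real.sqrt (magSq A₁ ψ x) with ha
    set b : E3 → ℝ := fun x => ‖A₀ x - A₁ x‖ * ‖ψ x‖ with hb
    have hψc : ContinuousOn ψ Ω := hψ.continuousOn
    have ham : AEStronglyMeasurable a (volume.restrict Ω) :=
      Real.continuous_sqrt.comp_aestronglyMeasurable hI₁.aestronglyMeasurable
    have hbm : AEStronglyMeasurable b (volume.restrict Ω) :=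
      (((hA₀c.sub hA₁c).norm).mul hψc.norm).aestronglyMeasurable hΩm
    have ha2 : ∀ x, a x ^ 2 = magSq A₁ ψ x := fun x => Real.sq_sqrt (magSq_nonneg A₁ ψ x)
    have ha0 : ∀ x, 0 ≤ a x := fun x => Real.sqrt_nonneg _
    have hb0 : ∀ x, 0 ≤ b x := fun x => mul_nonneg (norm_nonneg _) (norm_nonneg _)
    have hIa2 : Integrable (fun x => a x ^ 2) (volume.restrict Ω) := by
      simp_rw [ha2]; exact hI₁
    have hbS : ∀ᵐ x ∂(volume.restrict Ω), b x ≤ S * ‖ψ x‖ :=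
      (ae_restrict_iff' hΩm).2 (ae_of_all _ fun x hx =>
        mul_le_mul_of_nonneg_right (hSb x hx) (norm_nonneg _))
    have hIb2 : Integrable (fun x => b x ^ 2) (volume.restrict Ω) := by
      refine Integrable.mono' (hL.const_mul (S^2))
        (hbm.pow 2) ?_
      filter_upwards [hbS] with x hx
      rw [Real.norm_of_nonneg (by positivity)]
      calc b x ^ 2 ≤ (S * ‖ψ x‖)^2 := by nlinarith [hb0 x, norm_nonneg (ψ x)]
        _ = S^2 * ‖ψ x‖^2 := by ring
    have hIab : Integrable (fun x => a x * b x) (volume.restrict Ω) := by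
      refine Integrable.mono' ((hIa2.add hIb2).const_mul (1/2)) (ham.mul hbm) ?_
      refine ae_of_all _ fun x => ?_
      rw [Real.norm_of_nonneg (mul_nonneg (ha0 x) (hb0 x))]
      simp only [Pi.add_apply]
      nlinarith [sq_nonneg (a x - b x)]
    -- Cauchy-Schwarz
    have hma : MemLp a 2 (volume.restrict Ω) := (memLp_two_iff_integrable_sq ham).2 hIa2
    have hmb : MemLp b 2 (volume.restrict Ω) := (memLp_two_iff_integrable_sq hbm).2 hIb2
    have h2 : ENNReal.ofReal (2:ℝ) = 2 := by norm_num
    have hCS : ∫ x in Ω, a x * b x ≤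
        Real.sqrt (∫ x in Ω, a x ^ 2) * Real.sqrt (∫ x in Ω, b x ^ 2) := by
      have hma' : MemLp a (ENNReal.ofReal (2:ℝ)) (volume.restrict Ω) := by rw [h2]; exact hma
      have hmb' : MemLp b (ENNReal.ofReal (2:ℝ)) (volume.restrict Ω) := by rw [h2]; exact hmb
      have := integral_mul_le_Lp_mul_Lq_of_nonneg (μ := volume.restrict Ω)
        (Real.holderConjugate_iff.mpr ⟨one_lt_two, by norm_num⟩ : (2:ℝ).HolderConjugate 2)
        (ae_of_all _ ha0) (ae_of_all _ hb0) hma' hmb'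
      calc ∫ x in Ω, a x * b x ≤
          (∫ x in Ω, a x ^ (2:ℝ)) ^ (1/(2:ℝ)) * (∫ x in Ω, b x ^ (2:ℝ)) ^ (1/(2:ℝ)) := this
        _ = Real.sqrt (∫ x in Ω, a x ^ 2) * Real.sqrt (∫ x in Ω, b x ^ 2) := by
            rw [← Real.sqrt_eq_rpow, ← Real.sqrt_eq_rpow]
            norm_num [Real.rpow_natCast]
    -- pointwise bound
    have hpt : ∀ x, magSq A₀ ψ x ≤ (a x + b x)^2 := by
      intro x
      set u : EuclideanSpace ℂ (Fin 3) := WithLp.toLp 2 fun j =>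
        Complex.I * fderiv ℝ ψ x (EuclideanSpace.single j 1) + (A₁ x j : ℂ) * ψ x with hu
      set w : EuclideanSpace ℂ (Fin 3) := WithLp.toLp 2 fun j => ((A₀ x j - A₁ x j : ℝ) : ℂ) * ψ x with hw
      have h0 : magSq A₀ ψ x = ‖u + w‖^2 := by
        rw [C3_norm_sq]
        refine Finset.sum_congr rfl fun j _ => ?_
        have : (u + w) j = u j + w j := by simp
        rw [this, hu, hw]
        push_cast
        ring_nf
      have h1 : a x = ‖u‖ := by
        show Real.sqrt (magSq A₁ ψ x) = ‖u‖
        have hh : magSq A₁ ψ x = ‖u‖^2 := by rw [C3_norm_sq]; rfl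
        rw [hh, Real.sqrt_sq (norm_nonneg _)]
      have h2 : b x = ‖w‖ := by
        have hw2 : ‖w‖^2 = b x ^2 := by
          show _ = (‖A₀ x - A₁ x‖ * ‖ψ x‖)^2
          rw [C3_norm_sq]
          have : (‖A₀ x - A₁ x‖ * ‖ψ x‖)^2 = (∑ j, ((A₀ x - A₁ x) j)^2) * ‖ψ x‖^2 := by
            rw [← E3_norm_sq]; ring
          rw [this, Finset.sum_mul]
          refine Finset.sum_congr rfl fun j _ => ?_
          have : (A₀ x - A₁ x) j = A₀ x j - A₁ x j := by simp
          rw [hw]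
          simp only [norm_mul, Complex.norm_real, this]
          rw [mul_pow, Real.norm_eq_abs, sq_abs]
        have := congrArg Real.sqrt hw2
        rwa [Real.sqrt_sq (norm_nonneg _), Real.sqrt_sq (hb0 x), eq_comm] at this
      rw [h0, h1, h2]
      have := norm_add_le u w
      nlinarith [norm_nonneg (u+w), norm_nonneg u, norm_nonneg w]
    -- integrability of magSq A₀ ψ
    have hIab2 : Integrable (fun x => (a x + b x)^2) (volume.restrict Ω) := by
      have heq : (fun x => (a x + b x)^2) =
          fun x => a x^2 + 2*(a x * b x) + b x^2 := by funext x; ring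
      rw [heq]
      exact (hIa2.add (hIab.const_mul 2)).add hIb2
    have hfd : ContinuousOn (fderiv ℝ ψ) Ω := hψ.continuousOn_fderiv_of_isOpen hopen le_rfl
    have hmagc : ContinuousOn (magSq A₀ ψ) Ω := by
      apply continuousOn_finset_sum
      intro j _
      apply ContinuousOn.pow
      apply ContinuousOn.norm
      apply ContinuousOn.add
      · exact continuousOn_const.mul
          ((ContinuousLinearMap.apply ℝ ℂ (EuclideanSpace.single j 1)).continuous.comp_continuousOn hfd)
      · exact (Complex.continuous_ofReal.comp_continuousOn
          ((EuclideanSpace.proj j).continuous.comp_continuousOn hA₀c)).mul hψc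
    have hI₀ : IntegrableOn (magSq A₀ ψ) Ω := by
      refine Integrable.mono' hIab2 (hmagc.aestronglyMeasurable hΩm) ?_
      refine ae_of_all _ fun x => ?_
      rw [Real.norm_of_nonneg (magSq_nonneg A₀ ψ x)]
      exact hpt x
    -- integral bounds
    set I₁ := ∫ x in Ω, a x ^ 2 with hI₁def
    set J := ∫ x in Ω, b x ^ 2 with hJdef
    set L2 := ∫ x in Ω, ‖ψ x‖ ^ 2 with hL2def
    have hI₁0 : 0 ≤ I₁ := integral_nonneg fun x => sq_nonneg _
    have hJ0 : 0 ≤ J := integral_nonneg fun x => sq_nonneg _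
    have hint : ∫ x in Ω, magSq A₀ ψ x ≤ (Real.sqrt I₁ + Real.sqrt J)^2 := by
      have h1 : ∫ x in Ω, magSq A₀ ψ x ≤ ∫ x in Ω, (a x + b x)^2 :=
        integral_mono hI₀ hIab2 hpt
      have h2 : ∫ x in Ω, (a x + b x)^2 = I₁ + 2*(∫ x in Ω, a x * b x) + J := by
        have heq : (fun x => (a x + b x)^2) =
            fun x => a x^2 + (2*(a x * b x) + b x^2) := by funext x; ring
        have hg2 : Integrable (fun x => 2*(a x * b x) + b x ^ 2) (volume.restrict Ω) :=
          (hIab.const_mul 2).add hIb2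
        rw [heq, integral_add hIa2 hg2, integral_add (hIab.const_mul 2) hIb2,
          integral_const_mul]
        ring
      have h3 : (Real.sqrt I₁ + Real.sqrt J)^2 =
          I₁ + 2*(Real.sqrt I₁ * Real.sqrt J) + J := by
        rw [add_sq, Real.sq_sqrt hI₁0, Real.sq_sqrt hJ0]; ring
      rw [h3]
      have h4 := h1.trans_eq h2
      linarith [hCS]
    have hmag1 : ∫ x in Ω, magSq A₁ ψ x = I₁ := by
      rw [hI₁def]; exact integral_congr_ae (ae_of_all _ fun x => (ha2 x).symm)
    have hJle : Real.sqrt J ≤ S * Real.sqrt L2 := by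
      have h1 : J ≤ S^2 * L2 := by
        have heq : S^2 * L2 = ∫ x in Ω, S^2 * ‖ψ x‖^2 := (integral_const_mul _ _).symm
        rw [heq]
        refine integral_mono_ae hIb2 (hL.const_mul (S^2)) ?_
        filter_upwards [hbS] with x hx
        calc b x ^2 ≤ (S * ‖ψ x‖)^2 := by nlinarith [hb0 x, norm_nonneg (ψ x)]
          _ = S^2 * ‖ψ x‖^2 := by ring
      calc Real.sqrt J ≤ Real.sqrt (S^2 * L2) := Real.sqrt_le_sqrt h1
        _ = S * Real.sqrt L2 := by
            rw [Real.sqrt_mul (sq_nonneg S), Real.sqrt_sq hS0]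
    have hL2pos : 0 < L2 := hLpos
    have hsL2 : 0 < Real.sqrt L2 := Real.sqrt_pos.2 hL2pos
    -- conclude
    have hmem : (∫ x in Ω, magSq A₀ ψ x) / L2 ∈ RQ Ω A₀ := ⟨ψ, hψ, hL, hI₀, hLpos, rfl⟩
    have hmu0 : mu Ω A₀ ≤ (∫ x in Ω, magSq A₀ ψ x) / L2 := by
      rw [mu_eq]; exact csInf_le (RQ_bddBelow Ω A₀) hmem
    have step1 : Real.sqrt (mu Ω A₀) ≤ Real.sqrt ((∫ x in Ω, magSq A₀ ψ x) / L2) :=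
      Real.sqrt_le_sqrt hmu0
    have hnum : Real.sqrt (∫ x in Ω, magSq A₀ ψ x) ≤ Real.sqrt I₁ + S * Real.sqrt L2 := by
      have h1 : Real.sqrt (∫ x in Ω, magSq A₀ ψ x) ≤ Real.sqrt I₁ + Real.sqrt J := by
        calc Real.sqrt (∫ x in Ω, magSq A₀ ψ x)
            ≤ Real.sqrt ((Real.sqrt I₁ + Real.sqrt J)^2) := Real.sqrt_le_sqrt hint
          _ = Real.sqrt I₁ + Real.sqrt J := Real.sqrt_sq (by positivity)
      linarith [hJle]
    have step2 : Real.sqrt ((∫ x in Ω, magSq A₀ ψ x) / L2) ≤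
        (Real.sqrt I₁ + S * Real.sqrt L2) / Real.sqrt L2 := by
      rw [Real.sqrt_div (integral_nonneg fun x => magSq_nonneg A₀ ψ x) L2]
      gcongr
    have step3 : (Real.sqrt I₁ + S * Real.sqrt L2) / Real.sqrt L2 =
        Real.sqrt ((∫ x in Ω, magSq A₁ ψ x) / L2) + S := by
      rw [hmag1, Real.sqrt_div hI₁0 L2, add_div, mul_div_assoc, div_self hsL2.ne', mul_one]
    calc Real.sqrt (mu Ω A₀) ≤ Real.sqrt ((∫ x in Ω, magSq A₀ ψ x) / L2) := step1
      _ ≤ (Real.sqrt I₁ + S * Real.sqrt L2) / Real.sqrt L2 := step2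
      _ = Real.sqrt ((∫ x in Ω, magSq A₁ ψ x) / L2) + S := step3
  -- conclude from key
  have hRQ1 : (RQ Ω A₁).Nonempty := RQ_nonempty Ω hne hopen hbdd A₁ hA₁c M₁ hA₁b
  have hmu1 : 0 ≤ mu Ω A₁ := mu_nonneg Ω A₁ hRQ1
  refine le_of_forall_pos_le_add fun ε hε => ?_
  obtain ⟨r, hrmem, hrlt⟩ := exists_lt_of_csInf_lt hRQ1
    (show sInf (RQ Ω A₁) < mu Ω A₁ + ε^2 by rw [← mu_eq]; nlinarith)
  have h1 := key r hrmem
  have h2 : Real.sqrt r ≤ Real.sqrt (mu Ω A₁) + ε := by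
    have hr2 : r ≤ (Real.sqrt (mu Ω A₁) + ε)^2 := by
      nlinarith [Real.sq_sqrt hmu1, Real.sqrt_nonneg (mu Ω A₁)]
    calc Real.sqrt r ≤ Real.sqrt ((Real.sqrt (mu Ω A₁) + ε)^2) := Real.sqrt_le_sqrt hr2
      _ = Real.sqrt (mu Ω A₁) + ε := Real.sqrt_sq (by positivity)
  linarith

/-- for bounded continuous fields `A₀, A₁` on `Ω`,
`|√(μ(A₀)) − √(μ(A₁))| ≤ sup_{x∈Ω} |A₀(x) − A₁(x)|`. -/
theorem lipschitz_sqrt_mu (Ω : Set E3) (hne : Ω.Nonempty) (hopen : IsOpen Ω)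
    (hbdd : Bornology.IsBounded Ω) (A₀ A₁ : E3 → E3)
    (hA₀c : ContinuousOn A₀ Ω) (hA₁c : ContinuousOn A₁ Ω)
    (M₀ : ℝ) (hA₀b : ∀ x ∈ Ω, ‖A₀ x‖ ≤ M₀) (M₁ : ℝ) (hA₁b : ∀ x ∈ Ω, ‖A₁ x‖ ≤ M₁) :
    |Real.sqrt (mu Ω A₀) - Real.sqrt (mu Ω A₁)| ≤ ⨆ x : Ω, ‖A₀ ↑x - A₁ ↑x‖ := by
  rw [abs_sub_le_iff]
  constructor
  · rw [sub_le_iff_le_add, add_comm]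
    exact sqrt_mu_le Ω hne hopen hbdd A₀ A₁ hA₀c hA₁c M₀ hA₀b M₁ hA₁b
  · rw [sub_le_iff_le_add, add_comm]
    have h := sqrt_mu_le Ω hne hopen hbdd A₁ A₀ hA₁c hA₀c M₁ hA₁b M₀ hA₀b
    have : (⨆ x : Ω, ‖A₁ ↑x - A₀ ↑x‖) = ⨆ x : Ω, ‖A₀ ↑x - A₁ ↑x‖ := by
      congr 1; funext x; exact norm_sub_rev _ _
    rwa [this] at h
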